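/- arXiv:1710.05509 — 6 statements merged into one kernel-verified Lean document; each statement's English description precedes it below -/
import Mathlib

section
/- Let {v_k} be a sequence of nonnegative random variables on a probability space with E[v_0] < ∞, and let {α_k} and {β_k} be deterministic scalar sequences with 0 ≤ α_k ≤ 1 and β_k ≥ 0 for all k, ∑_{k=0}^∞ α_k = ∞, ∑_{k=0}^∞ β_k < ∞, and lim_{k→∞} β_k/α_k = 0. If E[v_{k+1} | v_0,…,v_k] ≤ (1 − α_k) v_k + β_k almost surely for all k ≥ 0, then v_k → 0 almost surely. -/
/-!
Taking expectations in the recursion gives the deterministic inequality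
`E v (k+1) ≤ (1 - α k) E v k + β k`, and since `∏ (1 - α k) ≤ exp (-∑ α k) → 0` while the tails of
`∑ β` vanish, `E v k → 0`. On the other hand, adding to `v k` the tail `∑_{j ≥ k} β j` produces a
nonnegative supermartingale, which converges almost surely; so `v k` converges almost surely, and
by Fatou's lemma its limit has expectation `0`, hence vanishes almost surely.
-/

open MeasureTheory Filter Topology Finset

section Deterministic

variable {a α β : ℕ → ℝ}

theorem prod_one_sub_le_exp_neg_sum {ι : Type*} (s : Finset ι) {x : ι → ℝ} (hx : ∀ i, x i ≤ 1) :
    ∏ i ∈ s, (1 - x i) ≤ Real.exp (-∑ i ∈ s, x i) := by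
  rw [← sum_neg_distrib, Real.exp_sum]
  exact prod_le_prod (fun i _ => sub_nonneg.2 (hx i))
    fun i _ => by linarith [Real.add_one_le_exp (-x i)]

theorem tendsto_prod_one_sub_of_tendsto_sum_atTop (hα : ∀ k, α k ≤ 1)
    (hα_div : Tendsto (fun n => ∑ k ∈ range n, α k) atTop atTop) :
    Tendsto (fun n => ∏ k ∈ range n, (1 - α k)) atTop (𝓝 0) :=
  squeeze_zero (fun _ => prod_nonneg fun k _ => sub_nonneg.2 (hα k))
    (fun _ => prod_one_sub_le_exp_neg_sum _ hα)
    (Real.tendsto_exp_atBot.comp (tendsto_neg_atTop_atBot.comp hα_div))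

theorem tendsto_sum_range_shift_atTop (K : ℕ)
    (hα_div : Tendsto (fun n => ∑ k ∈ range n, α k) atTop atTop) :
    Tendsto (fun n => ∑ k ∈ range n, α (k + K)) atTop atTop := by
  have h := tendsto_atTop_add_const_right _ (-∑ k ∈ range K, α k)
    (hα_div.comp (tendsto_add_atTop_nat K))
  refine h.congr fun n => ?_
  simp [sum_range_add, add_comm _ K]

theorem le_prod_one_sub_mul_add_sum (hα : ∀ k, 0 ≤ α k ∧ α k ≤ 1) (hβ : ∀ k, 0 ≤ β k)
    (hrec : ∀ k, a (k + 1) ≤ (1 - α k) * a k + β k) (n : ℕ) :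
    a n ≤ (∏ k ∈ range n, (1 - α k)) * a 0 + ∑ k ∈ range n, β k := by
  induction n with
  | zero => simp
  | succ n ih =>
    have hS : 0 ≤ ∑ k ∈ range n, β k := sum_nonneg fun k _ => hβ k
    have hαn : 0 ≤ 1 - α n := sub_nonneg.2 (hα n).2
    rw [prod_range_succ, sum_range_succ]
    calc a (n + 1) ≤ (1 - α n) * a n + β n := hrec n
      _ ≤ (1 - α n) * ((∏ k ∈ range n, (1 - α k)) * a 0 + ∑ k ∈ range n, β k) + β n := by gcongr
      _ ≤ _ := by nlinarith [mul_nonneg (hα n).1 hS]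

theorem tendsto_zero_of_le_one_sub_mul_add (ha : ∀ k, 0 ≤ a k) (hα : ∀ k, 0 ≤ α k ∧ α k ≤ 1)
    (hβ : ∀ k, 0 ≤ β k) (hα_div : Tendsto (fun n => ∑ k ∈ range n, α k) atTop atTop)
    (hβ_sum : Summable β) (hrec : ∀ k, a (k + 1) ≤ (1 - α k) * a k + β k) :
    Tendsto a atTop (𝓝 0) := by
  have hbound : ∀ K n,
      a (n + K) ≤ (∏ k ∈ range n, (1 - α (k + K))) * a K + ∑' k, β (k + K) := fun K n => by
    refine (le_prod_one_sub_mul_add_sum (a := fun n => a (n + K)) (fun k => hα (k + K))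
      (fun k => hβ (k + K)) (fun k => by simpa [add_right_comm] using hrec (k + K)) n).trans ?_
    simpa using Summable.sum_le_tsum _ (fun k _ => hβ (k + K)) (hβ_sum.comp_injective (add_left_injective K))
  refine tendsto_order.2 ⟨fun ε hε => .of_forall fun n => hε.trans_le (ha n), fun ε hε => ?_⟩
  obtain ⟨K, hK⟩ := ((tendsto_sum_nat_add β).eventually (gt_mem_nhds hε)).exists
  have hlim : Tendsto (fun n => (∏ k ∈ range n, (1 - α (k + K))) * a K + ∑' k, β (k + K))
      atTop (𝓝 (∑' k, β (k + K))) := by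
    simpa using ((tendsto_prod_one_sub_of_tendsto_sum_atTop (fun k => (hα (k + K)).2)
      (tendsto_sum_range_shift_atTop K hα_div)).mul_const (a K)).add_const (∑' k, β (k + K))
  rw [← map_add_atTop_eq_nat K, eventually_map]
  filter_upwards [hlim.eventually (gt_mem_nhds hK)] with n hn
  exact (hbound K n).trans_lt hn

end Deterministic
section Probability

variable {Ω : Type*} {m0 : MeasurableSpace Ω} {μ : Measure Ω}

theorem integral_le_of_condExp_le [IsFiniteMeasure μ] {m : MeasurableSpace Ω} (hm : m ≤ m0)
    {f g : Ω → ℝ} (hg : Integrable g μ) (h : μ[f|m] ≤ᵐ[μ] g) :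
    ∫ ω, f ω ∂μ ≤ ∫ ω, g ω ∂μ := by
  rw [← integral_condExp hm]
  exact integral_mono_ae integrable_condExp hg h

theorem MeasureTheory.Supermartingale.exists_ae_tendsto_of_nonneg [IsFiniteMeasure μ] {ℱ : Filtration ℕ m0}
    {f : ℕ → Ω → ℝ} (hf : Supermartingale f ℱ μ) (hf_nonneg : ∀ n ω, 0 ≤ f n ω) :
    ∀ᵐ ω ∂μ, ∃ c, Tendsto (fun n => f n ω) atTop (𝓝 c) := by
  have hbdd : ∀ n, eLpNorm ((-f) n) 1 μ ≤ (∫ ω, f 0 ω ∂μ).toNNReal := fun n => by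
    rw [Pi.neg_apply, eLpNorm_neg, eLpNorm_one_eq_lintegral_enorm,
      ← ofReal_integral_norm_eq_lintegral_enorm (hf.integrable n), ENNReal.ofNNReal_toNNReal]
    refine ENNReal.ofReal_le_ofReal ?_
    simp_rw [Real.norm_of_nonneg (hf_nonneg n _)]
    simpa using hf.setIntegral_le (Nat.zero_le n) MeasurableSet.univ
  filter_upwards [hf.neg.exists_ae_tendsto_of_bdd hbdd] with ω ⟨c, hc⟩
  exact ⟨-c, by simpa using hc.neg⟩

variable {ℱ : Filtration ℕ m0} {u : ℕ → Ω → ℝ} {β : ℕ → ℝ}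

theorem supermartingale_add_tsum_tail [IsFiniteMeasure μ] (hu_adapted : StronglyAdapted ℱ u)
    (hu_int : ∀ k, Integrable (u k) μ) (hβ_sum : Summable β)
    (hrec : ∀ k, μ[u (k + 1)|ℱ k] ≤ᵐ[μ] fun ω => u k ω + β k) :
    Supermartingale (fun k ω => u k ω + ∑' j, β (j + k)) ℱ μ := by
  refine supermartingale_nat (fun k => (hu_adapted k).add stronglyMeasurable_const)
    (fun k => (hu_int k).add (integrable_const _)) fun k => ?_
  have htail : ∑' j, β (j + k) = β k + ∑' j, β (j + (k + 1)) := by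
    rw [((summable_nat_add_iff k).2 hβ_sum).tsum_eq_zero_add]
    simp only [zero_add, add_right_comm _ 1 k, add_assoc]
  filter_upwards [condExp_add (hu_int (k + 1)) (integrable_const (∑' j, β (j + (k + 1)))) (ℱ k),
    hrec k] with ω hadd hω
  refine hadd.le.trans ?_
  rw [Pi.add_apply, condExp_const (ℱ.le k), htail]
  linarith

theorem ae_exists_tendsto_of_condExp_le_add_summable [IsFiniteMeasure μ]
    (hu_adapted : StronglyAdapted ℱ u) (hu_int : ∀ k, Integrable (u k) μ)
    (hu_nonneg : ∀ k ω, 0 ≤ u k ω) (hβ : ∀ k, 0 ≤ β k) (hβ_sum : Summable β)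
    (hrec : ∀ k, μ[u (k + 1)|ℱ k] ≤ᵐ[μ] fun ω => u k ω + β k) :
    ∀ᵐ ω ∂μ, ∃ c, Tendsto (fun k => u k ω) atTop (𝓝 c) := by
  have hw := supermartingale_add_tsum_tail hu_adapted hu_int hβ_sum hrec
  filter_upwards [hw.exists_ae_tendsto_of_nonneg fun k ω =>
    add_nonneg (hu_nonneg k ω) (tsum_nonneg fun j => hβ (j + k))] with ω ⟨c, hc⟩
  exact ⟨c, by simpa using hc.sub (tendsto_sum_nat_add β)⟩

theorem ae_tendsto_zero_of_tendsto_integral_zero (hu_meas : ∀ n, Measurable (u n))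
    (hu_nonneg : ∀ n ω, 0 ≤ u n ω) (hu_int : ∀ n, Integrable (u n) μ)
    (hu_lim : ∀ᵐ ω ∂μ, ∃ c, Tendsto (fun n => u n ω) atTop (𝓝 c))
    (h_int : Tendsto (fun n => ∫ ω, u n ω ∂μ) atTop (𝓝 0)) :
    ∀ᵐ ω ∂μ, Tendsto (fun n => u n ω) atTop (𝓝 0) := by
  have hmeas : ∀ n, Measurable fun ω => ENNReal.ofReal (u n ω) :=
    fun n => ENNReal.measurable_ofReal.comp (hu_meas n)
  have hlintegral : Tendsto (fun n => ∫⁻ ω, ENNReal.ofReal (u n ω) ∂μ) atTop (𝓝 0) := by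
    simp_rw [← ofReal_integral_eq_lintegral_ofReal (hu_int _) (ae_of_all _ (hu_nonneg _))]
    simpa using ENNReal.tendsto_ofReal h_int
  have hfatou : ∫⁻ ω, liminf (fun n => ENNReal.ofReal (u n ω)) atTop ∂μ = 0 :=
    nonpos_iff_eq_zero.1 ((lintegral_liminf_le hmeas).trans hlintegral.liminf_eq.le)
  filter_upwards [hu_lim, (lintegral_eq_zero_iff (Measurable.liminf hmeas)).1 hfatou]
    with ω ⟨c, hc⟩ hliminf
  have hc_nonneg : 0 ≤ c := ge_of_tendsto' hc fun n => hu_nonneg n ω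
  have hc_nonpos : c ≤ 0 := by
    rw [← ENNReal.ofReal_eq_zero, ← ((ENNReal.continuous_ofReal.tendsto c).comp hc).liminf_eq]
    exact hliminf
  rwa [le_antisymm hc_nonpos hc_nonneg] at hc

end Probability

theorem stmt0_general {Ω : Type*} [MeasurableSpace Ω] (μ : Measure Ω) [IsProbabilityMeasure μ]
    (v : ℕ → Ω → ℝ) (α β : ℕ → ℝ)
    (hv_meas : ∀ k, Measurable (v k))
    (hv_nonneg : ∀ k ω, 0 ≤ v k ω)
    (hv_int : ∀ k, Integrable (v k) μ)
    (hα : ∀ k, 0 ≤ α k ∧ α k ≤ 1)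
    (hβ : ∀ k, 0 ≤ β k)
    (hα_div : Tendsto (fun N => ∑ k ∈ Finset.range N, α k) atTop atTop)
    (hβ_sum : Summable β)
    (hrec : ∀ k, ∀ᵐ ω ∂μ,
      (μ[v (k + 1) | ⨆ i ∈ Finset.range (k + 1),
          MeasurableSpace.comap (v i) inferInstance]) ω ≤ (1 - α k) * v k ω + β k) :
    ∀ᵐ ω ∂μ, Tendsto (fun k => v k ω) atTop (nhds 0) := by
  set ℱ := Filtration.natural v fun k => (hv_meas k).stronglyMeasurable
  have hℱ : ∀ k, ⨆ i ∈ range (k + 1), MeasurableSpace.comap (v i) inferInstance = ℱ k :=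
    fun k => by simp [ℱ, Filtration.natural]
  simp only [hℱ] at hrec
  have hEv : Tendsto (fun k => ∫ ω, v k ω ∂μ) atTop (𝓝 0) := by
    refine tendsto_zero_of_le_one_sub_mul_add (fun k => integral_nonneg (hv_nonneg k)) hα hβ
      hα_div hβ_sum fun k => ?_
    calc ∫ ω, v (k + 1) ω ∂μ ≤ ∫ ω, (1 - α k) * v k ω + β k ∂μ :=
          integral_le_of_condExp_le (ℱ.le k)
            (((hv_int k).const_mul _).add (integrable_const _)) (hrec k)
      _ = (1 - α k) * ∫ ω, v k ω ∂μ + β k := by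
          rw [integral_add ((hv_int k).const_mul _) (integrable_const _), integral_const_mul]
          simp
  have hconv : ∀ᵐ ω ∂μ, ∃ c, Tendsto (fun k => v k ω) atTop (𝓝 c) :=
    ae_exists_tendsto_of_condExp_le_add_summable (Filtration.stronglyAdapted_natural _) hv_int
      hv_nonneg hβ hβ_sum fun k => (hrec k).mono fun ω hω =>
        hω.trans (by nlinarith [(hα k).1, hv_nonneg k ω])
  exact ae_tendsto_zero_of_tendsto_integral_zero hv_meas hv_nonneg hv_int hconv hEv

/-- Robbins–Siegmund-type lemma, Polyak.  Let `{v k}` be nonnegative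
random variables with `E[v 0] < ∞` (here: each `v k` integrable, which is implied),
and deterministic sequences `{α k}`, `{β k}` with `0 ≤ α k ≤ 1`, `β k ≥ 0`,
`∑ α k = ∞`, `∑ β k < ∞` and `β k / α k → 0`.  If
`E[v (k+1) | σ(v 0, …, v k)] ≤ (1 - α k) v k + β k` a.s. for all `k`,
then `v k → 0` almost surely. -/
theorem stmt0 {Ω : Type*} [MeasurableSpace Ω] (μ : Measure Ω) [IsProbabilityMeasure μ]
    (v : ℕ → Ω → ℝ) (α β : ℕ → ℝ)
    (hv_meas : ∀ k, Measurable (v k))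
    (hv_nonneg : ∀ k ω, 0 ≤ v k ω)
    (hv_int : ∀ k, Integrable (v k) μ)
    (hα : ∀ k, 0 ≤ α k ∧ α k ≤ 1)
    (hβ : ∀ k, 0 ≤ β k)
    (hα_div : Tendsto (fun N => ∑ k ∈ Finset.range N, α k) atTop atTop)
    (hβ_sum : Summable β)
    (hβα : Tendsto (fun k => β k / α k) atTop (nhds 0))
    (hrec : ∀ k, ∀ᵐ ω ∂μ,
      (μ[v (k + 1) | ⨆ i ∈ Finset.range (k + 1),
          MeasurableSpace.comap (v i) inferInstance]) ω ≤ (1 - α k) * v k ω + β k) :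
    ∀ᵐ ω ∂μ, Tendsto (fun k => v k ω) atTop (nhds 0) :=
  stmt0_general μ v α β hv_meas hv_nonneg hv_int hα hβ hα_div hβ_sum hrec
end

section
/- Let 0 < a_1 ≤ a_2 ≤ … ≤ a_n be real numbers and let P, S be positive scalars such that ∑_{i=1}^n a_i ≤ S and ∏_{i=1}^n a_i ≥ P. Then a_1 ≥ (n−1)! · P / S^{n−1}. -/
lemma prod_range_sub_eq_factorial (m : ℕ) :
    ∏ i ∈ Finset.range m, (m - i) = m.factorial := by
  induction m with
  | zero => simp
  | succ k ih =>
    rw [Finset.prod_range_succ']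
    simp only [Nat.succ_sub_succ, Nat.sub_zero, ih, Nat.factorial_succ, Nat.mul_comm]

/-- Lemma `sumProductBounds`.
Let `0 < a 0 ≤ a 1 ≤ … ≤ a (n-1)` be real numbers and `P`, `S` positive scalars with
`∑ i, a i ≤ S` and `∏ i, a i ≥ P`.  Then `a 0 ≥ (n-1)! * P / S^(n-1)`. -/
theorem stmt4 (n : ℕ) (hn : 0 < n) (a : Fin n → ℝ) (P S : ℝ)
    (hpos : ∀ i, 0 < a i) (hmono : Monotone a)
    (hP : 0 < P) (hS : 0 < S)
    (hsum : ∑ i, a i ≤ S) (hprod : P ≤ ∏ i, a i) :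
    (Nat.factorial (n - 1) : ℝ) * P / S ^ (n - 1) ≤ a ⟨0, hn⟩ := by
  obtain ⟨m, rfl⟩ : ∃ m, n = m + 1 := ⟨n - 1, (Nat.succ_pred_eq_of_pos hn).symm⟩
  simp only [Nat.add_sub_cancel]
  have h0 : (⟨0, hn⟩ : Fin (m + 1)) = 0 := rfl
  rw [h0, div_le_iff₀ (by positivity)]
  have key : ∀ i : Fin m, ((m - (i : ℕ) : ℕ) : ℝ) * a i.succ ≤ S := by
    intro i
    have hcard : (Finset.Ici (i.succ : Fin (m + 1))).card = m - (i : ℕ) := by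
      rw [Fin.card_Ici]
      simp [Fin.val_succ]
    calc ((m - (i : ℕ) : ℕ) : ℝ) * a i.succ
        = (Finset.Ici (i.succ : Fin (m + 1))).card • a i.succ := by
          rw [hcard, nsmul_eq_mul]
      _ ≤ ∑ j ∈ Finset.Ici (i.succ : Fin (m + 1)), a j :=
          Finset.card_nsmul_le_sum _ _ _ (fun j hj => hmono (Finset.mem_Ici.mp hj))
      _ ≤ ∑ j, a j :=
          Finset.sum_le_sum_of_subset_of_nonneg (Finset.subset_univ _)
            (fun j _ _ => (hpos j).le)
      _ ≤ S := hsum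
  have hprod2 : (m.factorial : ℝ) * ∏ i : Fin m, a i.succ ≤ S ^ m := by
    calc (m.factorial : ℝ) * ∏ i : Fin m, a i.succ
        = ∏ i : Fin m, (((m - (i : ℕ) : ℕ) : ℝ) * a i.succ) := by
          rw [Finset.prod_mul_distrib]
          congr 1
          rw [← Nat.cast_prod]
          norm_cast
          rw [Fin.prod_univ_eq_prod_range (fun i => m - i), prod_range_sub_eq_factorial]
      _ ≤ ∏ _i : Fin m, S :=
          Finset.prod_le_prod (fun i _ => mul_nonneg (Nat.cast_nonneg _) (hpos _).le) (fun i _ => key i)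
      _ = S ^ m := by simp
  have hsplit : ∏ i : Fin (m + 1), a i = a 0 * ∏ i : Fin m, a i.succ :=
    Fin.prod_univ_succ a
  have hp : 0 < ∏ i : Fin m, a i.succ := Finset.prod_pos (fun i _ => hpos _)
  nlinarith [mul_le_mul_of_nonneg_left hprod2 (hpos 0).le,
    mul_le_mul_of_nonneg_left hprod (Nat.cast_pos.mpr m.factorial_pos : (0:ℝ) < m.factorial).le]
end

section
/- Consider the IR-SQN scheme with the limited-memory BFGS construction (pairs s_{⌈k/2⌉}, y_{⌈k/2⌉}, alternating regularization rule, and update rules for H_k with memory parameter m). Suppose F(·,ξ) is convex and continuously differentiable with L_ξ-Lipschitz gradient for every ξ, L := sup_ξ L_ξ < ∞, and at each iteration ∇F(x_k,ξ_k) + μ_k(x_k − x_0) ≠ 0. Then for every odd k ≥ 2m−1 the curvature condition holds: s_{⌈k/2⌉}ᵀ y_{⌈k/2⌉} > 0; in fact s_{⌈k/2⌉}ᵀ y_{⌈k/2⌉} ≥ τ μ_k^δ ‖x_k − x_{k−1}‖² > 0. -/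
open Real
open scoped RealInnerProductSpace

/-- One BFGS (inverse-Hessian) update applied to a vector `v`:
`H_new = (I − y sᵀ/(yᵀs))ᵀ H (I − y sᵀ/(yᵀs)) + s sᵀ/(yᵀs)`, expressed pointwise. -/
noncomputable def bfgsUpdate {n : ℕ} (s y : EuclideanSpace ℝ (Fin n))
    (Hprev : EuclideanSpace ℝ (Fin n) →ₗ[ℝ] EuclideanSpace ℝ (Fin n))
    (v : EuclideanSpace ℝ (Fin n)) : EuclideanSpace ℝ (Fin n) :=
  let ρ : ℝ := 1 / ⟪y, s⟫
  let w := Hprev (v - (ρ * ⟪s, v⟫) • y)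
  w - (ρ * ⟪y, w⟫) • s + (ρ * ⟪s, v⟫) • s


lemma inner_self_pos' {n : ℕ} (v : EuclideanSpace ℝ (Fin n)) (hv : v ≠ 0) :
    0 < ⟪v, v⟫ := by
  rw [real_inner_self_eq_norm_sq]
  have := norm_pos_iff.mpr hv
  positivity

lemma bfgs_quadform {n : ℕ} (s y : EuclideanSpace ℝ (Fin n))
    (H : EuclideanSpace ℝ (Fin n) →ₗ[ℝ] EuclideanSpace ℝ (Fin n))
    (hH : ∀ v, v ≠ 0 → 0 < ⟪v, H v⟫) (hsy : 0 < ⟪y, s⟫) :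
    ∀ v, v ≠ 0 → 0 < ⟪v, bfgsUpdate s y H v⟫ := by
  intro v hv
  set ρ : ℝ := 1 / ⟪y, s⟫ with hρdef
  have hρ : 0 < ρ := by positivity
  set u := v - (ρ * ⟪s, v⟫) • y with hu
  set w := H u with hw
  have hval : ⟪v, bfgsUpdate s y H v⟫ = ⟪u, w⟫ + ρ * ⟪s, v⟫ ^ 2 := by
    simp only [bfgsUpdate, hu, hw]
    rw [inner_add_right, inner_sub_right, inner_smul_right, inner_smul_right,
      inner_sub_left, inner_smul_left]
    simp only [RCLike.star_def, starRingEnd_apply, star_trivial]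
    rw [real_inner_comm v s]
    ring
  rw [hval]
  rcases eq_or_ne ⟪s, v⟫ 0 with h0 | h0
  · have huv : u = v := by rw [hu, h0]; simp
    rw [hw, huv, h0]
    simpa using hH v hv
  · have h1 : 0 < ρ * ⟪s, v⟫ ^ 2 := by positivity
    have h2 : 0 ≤ ⟪u, w⟫ := by
      rcases eq_or_ne u 0 with h | h
      · simp [hw, h]
      · exact (hH u h).le
    linarith

lemma grad_mono {n : ℕ} {f : EuclideanSpace ℝ (Fin n) → ℝ}
    (hc : ConvexOn ℝ Set.univ f) (hd : Differentiable ℝ f)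
    (a b : EuclideanSpace ℝ (Fin n)) :
    0 ≤ ⟪b - a, gradient f b - gradient f a⟫ := by
  set c : ℝ →ᵃ[ℝ] EuclideanSpace ℝ (Fin n) := AffineMap.lineMap a b with hcdef
  have hconv : ConvexOn ℝ Set.univ (f ∘ c) := by
    have := hc.comp_affineMap c
    simpa using this
  have hder : ∀ t : ℝ, HasDerivAt (f ∘ c) ⟪gradient f (c t), b - a⟫ t := by
    intro t
    have h1 : HasFDerivAt f (InnerProductSpace.toDual ℝ _ (gradient f (c t))) (c t) :=
      (hasGradientAt_iff_hasFDerivAt).mp (hd (c t)).hasGradientAt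
    have h2 : HasDerivAt (fun t : ℝ => c t) (b - a) t := by
      have hcfun : (fun t : ℝ => c t) = fun t : ℝ => t • (b - a) + a := by
        funext t; simp [hcdef, AffineMap.lineMap_apply_module]; module
      rw [hcfun]
      simpa using ((hasDerivAt_id t).smul_const (b - a)).add_const a
    simpa using h1.comp_hasDerivAt t h2
  have hA := hconv.le_slope_of_hasDerivAt (Set.mem_univ (0:ℝ)) (Set.mem_univ (1:ℝ))
    one_pos (hder 0)
  have hB := hconv.slope_le_of_hasDerivAt (Set.mem_univ (0:ℝ)) (Set.mem_univ (1:ℝ))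
    one_pos (hder 1)
  have hc0 : c 0 = a := by simp [hcdef]
  have hc1 : c 1 = b := by simp [hcdef]
  rw [hc0] at hA
  rw [hc1] at hB
  have hle : ⟪gradient f a, b - a⟫ ≤ ⟪gradient f b, b - a⟫ := le_trans hA hB
  rw [inner_sub_right]
  have e1 := real_inner_comm (b - a) (gradient f b)
  have e2 := real_inner_comm (b - a) (gradient f a)
  linarith

/-- Lemma 4.3(a): the curvature condition.
For the IR-SQN scheme with the limited-memory BFGS construction, if `F(·,ξ)` is convex and
continuously differentiable with a uniformly `L`-Lipschitz gradient and the regularized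
gradient never vanishes along the iterates, then for every odd `k ≥ 2m−1`,
`s_{⌈k/2⌉}ᵀ y_{⌈k/2⌉} ≥ τ μ_k^δ ‖x_k − x_{k−1}‖² > 0`. -/
theorem stmt5 (n d m : ℕ) (hm : 1 ≤ m)
    (F : EuclideanSpace ℝ (Fin n) → EuclideanSpace ℝ (Fin d) → ℝ)
    (ξ : ℕ → EuclideanSpace ℝ (Fin d))
    (x s y : ℕ → EuclideanSpace ℝ (Fin n))
    (H : ℕ → (EuclideanSpace ℝ (Fin n) →ₗ[ℝ] EuclideanSpace ℝ (Fin n)))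
    (Haux : ℕ → ℕ → (EuclideanSpace ℝ (Fin n) →ₗ[ℝ] EuclideanSpace ℝ (Fin n)))
    (γ μ : ℕ → ℝ) (τ δ L : ℝ)
    (hτ : 0 < τ) (hδ0 : 0 < δ) (hδ1 : δ ≤ 1) (hL : 0 < L)
    (hγ : ∀ k, 0 < γ k) (hμ : ∀ k, 0 < μ k)
    -- F(·,ξ) convex, continuously differentiable, uniformly L-Lipschitz gradients
    (hFconv : ∀ v, ConvexOn ℝ Set.univ (fun z => F z v))
    (hFdiff : ∀ v, Differentiable ℝ (fun z => F z v))
    (hFlip : ∀ v a b, ‖gradient (fun z => F z v) a - gradient (fun z => F z v) b‖ ≤ L * ‖a - b‖)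
    -- alternating regularization rule
    (hμrule : ∀ k, 1 ≤ k → (Odd k → μ k = μ (k - 1)) ∧ (Even k → μ k < μ (k - 1)))
    -- the pairs (s_i, y_i), i = ⌈k/2⌉, for odd k
    (hs : ∀ k, Odd k → s ((k + 1) / 2) = x k - x (k - 1))
    (hy : ∀ k, Odd k → y ((k + 1) / 2) =
      gradient (fun z => F z (ξ (k - 1))) (x k) - gradient (fun z => F z (ξ (k - 1))) (x (k - 1))
        + (τ * μ k ^ δ) • s ((k + 1) / 2))
    -- the limited-memory BFGS matrices
    (hHsmall : ∀ k, k ≤ 2 * m - 2 → H k = LinearMap.id)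
    (hHodd : ∀ k, Odd k → 2 * m - 1 ≤ k → H k = Haux k m)
    (hHeven : ∀ k, Even k → 2 * m - 1 ≤ k → H k = H (k - 1))
    (hHaux0 : ∀ k, Odd k → 2 * m - 1 ≤ k →
      Haux k 0 = (⟪s ((k + 1) / 2), y ((k + 1) / 2)⟫ / ⟪y ((k + 1) / 2), y ((k + 1) / 2)⟫) •
        (LinearMap.id : EuclideanSpace ℝ (Fin n) →ₗ[ℝ] EuclideanSpace ℝ (Fin n)))
    (hHauxrec : ∀ k, Odd k → 2 * m - 1 ≤ k → ∀ j, 1 ≤ j → j ≤ m → ∀ v,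
      Haux k j v = bfgsUpdate (s ((k + 1) / 2 - (m - j))) (y ((k + 1) / 2 - (m - j)))
        (Haux k (j - 1)) v)
    -- the IR-SQN scheme and non-degeneracy of the regularized gradient
    (hscheme : ∀ k, x (k + 1) =
      x k - γ k • (H k) (gradient (fun z => F z (ξ k)) (x k) + μ k • (x k - x 0)))
    (hnonzero : ∀ k, gradient (fun z => F z (ξ k)) (x k) + μ k • (x k - x 0) ≠ 0) :
    ∀ k, Odd k → 2 * m - 1 ≤ k →
      τ * μ k ^ δ * ‖x k - x (k - 1)‖ ^ 2 ≤ ⟪s ((k + 1) / 2), y ((k + 1) / 2)⟫ ∧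
      0 < τ * μ k ^ δ * ‖x k - x (k - 1)‖ ^ 2 := by
  have key : ∀ k,
      (Odd k → τ * μ k ^ δ * ‖x k - x (k - 1)‖ ^ 2 ≤ ⟪s ((k + 1) / 2), y ((k + 1) / 2)⟫ ∧
        0 < τ * μ k ^ δ * ‖x k - x (k - 1)‖ ^ 2) ∧
      (∀ v, v ≠ 0 → 0 < ⟪v, H k v⟫) := by
    intro k
    induction k using Nat.strong_induction_on with
    | _ k IH =>
    -- Step 1: the curvature condition at odd k
    have curv : Odd k → τ * μ k ^ δ * ‖x k - x (k - 1)‖ ^ 2 ≤ ⟪s ((k + 1) / 2), y ((k + 1) / 2)⟫ ∧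
        0 < τ * μ k ^ δ * ‖x k - x (k - 1)‖ ^ 2 := by
      intro hk
      have hk1 : 1 ≤ k := hk.pos
      have hpd := (IH (k - 1) (by omega)).2
      have hxne : x k - x (k - 1) ≠ 0 := by
        intro heq
        have hsch := hscheme (k - 1)
        have hk01 : k - 1 + 1 = k := by omega
        rw [hk01] at hsch
        set g := gradient (fun z => F z (ξ (k - 1))) (x (k - 1)) +
          μ (k - 1) • (x (k - 1) - x 0) with hg
        have h0 : γ (k - 1) • (H (k - 1)) g = 0 := by
          have : x k - x (k - 1) = -(γ (k - 1) • (H (k - 1)) g) := by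
            rw [hsch]; abel
          rw [heq] at this
          simpa using this.symm
        have hHg : (H (k - 1)) g = 0 := by
          have := smul_eq_zero.mp h0
          rcases this with h | h
          · exact absurd h (ne_of_gt (hγ (k - 1)))
          · exact h
        have := hpd g (hnonzero (k - 1))
        rw [hHg] at this
        simp at this
      have hnorm : 0 < ‖x k - x (k - 1)‖ := norm_pos_iff.mpr hxne
      have hcoef : 0 < τ * μ k ^ δ :=
        mul_pos hτ (Real.rpow_pos_of_pos (hμ k) δ)
      have hpos : 0 < τ * μ k ^ δ * ‖x k - x (k - 1)‖ ^ 2 := by positivity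
      refine ⟨?_, hpos⟩
      rw [hy k hk, hs k hk]
      rw [inner_add_right, inner_smul_right, real_inner_self_eq_norm_sq]
      have hmono := grad_mono (hFconv (ξ (k - 1))) (hFdiff (ξ (k - 1))) (x (k - 1)) (x k)
      linarith
    refine ⟨curv, ?_⟩
    -- Step 2: positive definiteness of H k
    rcases le_or_gt k (2 * m - 2) with hsmall | hbig
    · rw [hHsmall k hsmall]
      intro v hv
      simpa using inner_self_pos' v hv
    · have hk2m : 2 * m - 1 ≤ k := by omega
      rcases Nat.even_or_odd k with heven | hodd
      · rw [hHeven k heven hk2m]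
        have hk1 : 1 ≤ k := by omega
        exact (IH (k - 1) (by omega)).2
      · rw [hHodd k hodd hk2m]
        obtain ⟨c, hc⟩ := hodd
        have hodd' : Odd k := ⟨c, hc⟩
        -- curvature at any odd k' ≤ k
        have curvAt : ∀ k', Odd k' → k' ≤ k → 0 < ⟪s ((k' + 1) / 2), y ((k' + 1) / 2)⟫ := by
          intro k' hk' hle
          rcases eq_or_lt_of_le hle with heq | hlt
          · subst heq
            exact lt_of_lt_of_le (curv hk').2 (curv hk').1
          · exact lt_of_lt_of_le ((IH k' hlt).1 hk').2 ((IH k' hlt).1 hk').1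
        have haux : ∀ j, j ≤ m → ∀ v, v ≠ 0 → 0 < ⟪v, Haux k j v⟫ := by
          intro j
          induction j with
          | zero =>
            intro _ v hv
            have hsy : 0 < ⟪s ((k + 1) / 2), y ((k + 1) / 2)⟫ := curvAt k hodd' le_rfl
            have hyne : y ((k + 1) / 2) ≠ 0 := by
              intro h0
              rw [h0] at hsy
              simp at hsy
            have hyy : 0 < ⟪y ((k + 1) / 2), y ((k + 1) / 2)⟫ := inner_self_pos' _ hyne
            have hvv : 0 < ⟪v, v⟫ := inner_self_pos' v hv
            rw [hHaux0 k hodd' hk2m]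
            simp only [LinearMap.smul_apply, LinearMap.id_apply, inner_smul_right]
            exact mul_pos (div_pos hsy hyy) hvv
          | succ j ihj =>
            intro hjm v hv
            have hrec := hHauxrec k hodd' hk2m (j + 1) (by omega) hjm
            simp only [Nat.add_sub_cancel] at hrec
            rw [hrec v]
            set k' := k - 2 * (m - (j + 1)) with hk'def
            have hk'odd : Odd k' := ⟨c - (m - (j + 1)), by omega⟩
            have hk'le : k' ≤ k := by omega
            have hi : (k' + 1) / 2 = (k + 1) / 2 - (m - (j + 1)) := by omega
            have hsy : 0 < ⟪s ((k + 1) / 2 - (m - (j + 1))), y ((k + 1) / 2 - (m - (j + 1)))⟫ := by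
              rw [← hi]; exact curvAt k' hk'odd hk'le
            have hys : 0 < ⟪y ((k + 1) / 2 - (m - (j + 1))), s ((k + 1) / 2 - (m - (j + 1)))⟫ := by
              rwa [real_inner_comm]
            exact bfgs_quadform _ _ _ (ihj (by omega)) hys v hv
        exact haux m le_rfl
  intro k hk _
  exact (key k).1 hk
end

section
/- Let γ_k = γ_0/(k+1)^a and μ_k = 2^b μ_0/(k+κ)^b, where κ = 2 if k is even and κ = 1 if k is odd, with positive scalars γ_0, μ_0 satisfying γ_0 μ_0 ≤ L(m+n), and positive scalars a, b, δ with δ ≤ 1, a/b > 1 + 2δ(n+m), a + b ≤ 1, a + 2b > 1, and a − δb(m+n) > 0.5. Then μ_k satisfies μ_k = μ_{k−1} for odd k and μ_k < μ_{k−1} for even k, and the pair (γ_k, μ_k) satisfies Assumption 4 with λ_min = 1/((m+n)(L + τ μ_0^δ)) and α = −δ(n+m). -/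
/-!
Since `k + κ_k = 2 (⌊k/2⌋ + 1)`, the sequence `μ_k = μ₀ (⌊k/2⌋ + 1)^(-b)` is the strictly
decreasing sequence `μ₀ (j + 1)^(-b)` with every term repeated twice; this gives the
alternating rule and monotonicity, and shows `μ_k = Θ(k^(-b))`, while `γ_k = γ₀ (k + 1)^(-a)`.
Each remaining condition of Assumption 4 concerns a product of powers of `γ_k` and `μ_k`, hence a
sequence `Θ(k^(-s))`, which tends to `0` when `s > 0` and is summable iff `s > 1`; the hypotheses
on `a, b, δ` are exactly these inequalities on the relevant exponents `s`.
-/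

open Filter Real Asymptotics Topology

/-- Compared with `k + 1` rather than `k`, so that the model sequence is positive everywhere. -/
def DecaysLike (f : ℕ → ℝ) (p : ℝ) : Prop :=
  f =Θ[atTop] fun k => ((k : ℝ) + 1) ^ (-p)

namespace DecaysLike

variable {f g : ℕ → ℝ} {p q : ℝ}

lemma add_one_rpow_neg : DecaysLike (fun k => ((k : ℝ) + 1) ^ (-p)) p := isTheta_refl _ _

lemma const_mul (hf : DecaysLike f p) {c : ℝ} (hc : c ≠ 0) : DecaysLike (fun k => c * f k) p :=
  hf.const_mul_left hc

lemma mul (hf : DecaysLike f p) (hg : DecaysLike g q) :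
    DecaysLike (fun k => f k * g k) (p + q) :=
  (IsTheta.mul hf hg).trans_eventuallyEq <| .of_forall fun k => by
    dsimp only; rw [neg_add, rpow_add (by positivity)]

lemma rpow (hf : DecaysLike f p) (hf0 : ∀ k, 0 ≤ f k) (s : ℝ) :
    DecaysLike (fun k => f k ^ s) (p * s) :=
  (IsTheta.rpow (.of_forall hf0) (.of_forall fun _ => by positivity) hf).trans_eventuallyEq <|
    .of_forall fun k => by dsimp only; rw [← rpow_mul (by positivity), neg_mul]

lemma pow (hf : DecaysLike f p) (n : ℕ) : DecaysLike (fun k => f k ^ n) (p * n) :=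
  (IsTheta.pow hf n).trans_eventuallyEq <| .of_forall fun k => by
    dsimp only; rw [← neg_mul, rpow_mul_natCast (by positivity)]

lemma summable_iff (hf : DecaysLike f p) : Summable f ↔ 1 < p := by
  have hsum : Summable (fun k : ℕ => ((k : ℝ) + 1) ^ (-p)) ↔ 1 < p := by
    rw [← neg_lt_neg_iff, ← summable_nat_rpow]
    exact_mod_cast summable_nat_add_iff (f := fun n : ℕ => (n : ℝ) ^ (-p)) 1
  rw [← hsum]
  exact ⟨fun h => summable_of_isBigO_nat h hf.isBigO_symm,
    fun h => summable_of_isBigO_nat h hf.isBigO⟩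

lemma tendsto_zero (hf : DecaysLike f p) (hp : 0 < p) : Tendsto f atTop (𝓝 0) :=
  hf.isBigO.trans_tendsto <| (tendsto_rpow_neg_atTop hp).comp <|
    tendsto_atTop_add_const_right _ 1 tendsto_natCast_atTop_atTop

end DecaysLike

lemma isTheta_natCast_div_add_one {d : ℕ} (hd : 0 < d) :
    (fun k : ℕ => ((k / d : ℕ) : ℝ) + 1) =Θ[atTop] fun k => (k : ℝ) + 1 := by
  refine ⟨.of_bound 1 (.of_forall fun k => ?_), .of_bound d (.of_forall fun k => ?_)⟩
  · rw [norm_of_nonneg (by positivity), norm_of_nonneg (by positivity), one_mul]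
    gcongr
    exact_mod_cast Nat.div_le_self k d
  · rw [norm_of_nonneg (by positivity), norm_of_nonneg (by positivity)]
    have : k + 1 ≤ d * (k / d + 1) := by
      have := Nat.lt_div_mul_add (a := k) hd
      rw [mul_comm]; linarith
    exact_mod_cast this

lemma strictAnti_mul_add_one_rpow_neg {c p : ℝ} (hc : 0 < c) (hp : 0 < p) :
    StrictAnti fun k : ℕ => c * ((k : ℝ) + 1) ^ (-p) := fun i j hij =>
  mul_lt_mul_of_pos_left
    (rpow_lt_rpow_of_neg (by positivity) (by simpa using hij) (by linarith)) hc

lemma decaysLike_natCast_div_add_one_rpow_neg {d : ℕ} (hd : 0 < d) (p : ℝ) :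
    DecaysLike (fun k => (((k / d : ℕ) : ℝ) + 1) ^ (-p)) p :=
  (isTheta_natCast_div_add_one hd).rpow (.of_forall fun _ => by positivity)
    (.of_forall fun _ => by positivity)

lemma two_rpow_mul_div_add_ite_even_rpow (b c : ℝ) (k : ℕ) :
    2 ^ b * c / ((k : ℝ) + (if Even k then 2 else 1)) ^ b =
      c * (((k / 2 : ℕ) : ℝ) + 1) ^ (-b) := by
  have hk : (k : ℝ) + (if Even k then 2 else 1) = 2 * (((k / 2 : ℕ) : ℝ) + 1) := by
    rcases Nat.even_or_odd' k with ⟨j, rfl | rfl⟩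
    · simp; ring
    · rw [if_neg (by simp), show (2 * j + 1) / 2 = j by omega]
      push_cast; ring
  rw [hk, mul_rpow (by norm_num) (by positivity), rpow_neg (by positivity)]
  field_simp

theorem stmt8_general (n m : ℕ)
    (L τ γ0 μ0 a b δ : ℝ)
    (hτ : 0 < τ) (hγ0 : 0 < γ0) (hμ0 : 0 < μ0)
    (hγμ : γ0 * μ0 ≤ L * ((m : ℝ) + n))
    (ha : 0 < a) (hb : 0 < b)
    (hab1 : 1 + 2 * δ * ((n : ℝ) + m) < a / b)
    (hab2 : a + b ≤ 1) (hab3 : 1 < a + 2 * b)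
    (hab4 : 1 / 2 < a - δ * b * ((m : ℝ) + n))
    (γ μ : ℕ → ℝ)
    (hγdef : ∀ k, γ k = γ0 / ((k : ℝ) + 1) ^ a)
    (hμdef : ∀ k, μ k = 2 ^ b * μ0 / ((k : ℝ) + (if Even k then 2 else 1)) ^ b) :
    -- the alternating rule (2.3) for the regularization parameter
    (∀ k, 1 ≤ k → (Odd k → μ k = μ (k - 1)) ∧ (Even k → μ k < μ (k - 1))) ∧
    -- Assumption 4(a)
    Tendsto (fun k => γ k * μ k ^ (2 * (-δ * ((n : ℝ) + m)) - 1)) atTop (nhds 0) ∧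
    -- Assumption 4(b)
    ((∀ k, μ (k + 1) ≤ μ k) ∧ Tendsto μ atTop (nhds 0)) ∧
    -- Assumption 4(c)
    (∀ k, (1 / (((m : ℝ) + n) * (L + τ * μ0 ^ δ))) * γ k * μ k ≤ 1) ∧
    -- Assumption 4(d)
    Tendsto (fun N => ∑ k ∈ Finset.range N, γ k * μ k) atTop atTop ∧
    -- Assumption 4(e)
    Summable (fun k => μ k ^ 2 * γ k) ∧
    -- Assumption 4(f)
    Summable (fun k => γ k ^ 2 * μ k ^ (2 * (-δ * ((n : ℝ) + m)))) := by
  set ν : ℕ → ℝ := fun j => μ0 * ((j : ℝ) + 1) ^ (-b)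
  have hν : StrictAnti ν := strictAnti_mul_add_one_rpow_neg hμ0 hb
  have hμ : ∀ k, μ k = ν (k / 2) := fun k =>
    (hμdef k).trans (two_rpow_mul_div_add_ite_even_rpow b μ0 k)
  have hγ : ∀ k, γ k = γ0 * ((k : ℝ) + 1) ^ (-a) := fun k => by
    rw [hγdef, rpow_neg (by positivity), div_eq_mul_inv]
  have hμ_pos : ∀ k, 0 < μ k := fun k => by rw [hμ]; positivity
  have hγ_pos : ∀ k, 0 < γ k := fun k => by rw [hγ]; positivity
  have hμD : DecaysLike μ b := by
    rw [funext hμ]; exact (decaysLike_natCast_div_add_one_rpow_neg two_pos b).const_mul hμ0.ne'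
  have hγD : DecaysLike γ a := by
    rw [funext hγ]; exact DecaysLike.add_one_rpow_neg.const_mul hγ0.ne'
  have hba : (1 + 2 * δ * ((n : ℝ) + m)) * b < a := (lt_div_iff₀ hb).mp hab1
  refine ⟨fun k hk => ?_, (hγD.mul (hμD.rpow (fun k => (hμ_pos k).le) _)).tendsto_zero ?_,
    ⟨fun k => ?_, hμD.tendsto_zero hb⟩, fun k => ?_, ?_,
    ((hμD.pow 2).mul hγD).summable_iff.mpr ?_,
    ((hγD.pow 2).mul (hμD.rpow (fun k => (hμ_pos k).le) _)).summable_iff.mpr ?_⟩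
  · obtain ⟨j, rfl⟩ := Nat.exists_eq_add_of_le' hk
    simp only [Nat.add_sub_cancel, hμ]
    refine ⟨fun ⟨i, hi⟩ => congrArg ν (by omega), fun ⟨i, hi⟩ => hν (by omega)⟩
  · linarith
  · rw [hμ, hμ]; exact hν.antitone (by omega)
  · have hγ_le : γ k ≤ γ0 := by
      simpa [hγ] using (strictAnti_mul_add_one_rpow_neg hγ0 ha).antitone (Nat.zero_le k)
    have hμ_le : μ k ≤ μ0 := by simpa [hμ, ν] using hν.antitone (Nat.zero_le (k / 2))
    have hD : γ0 * μ0 ≤ ((m : ℝ) + n) * (L + τ * μ0 ^ δ) := by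
      have : 0 ≤ ((m : ℝ) + n) * (τ * μ0 ^ δ) := by positivity
      linarith
    rw [mul_assoc, one_div_mul_eq_div, div_le_one (by linarith [mul_pos hγ0 hμ0])]
    exact (mul_le_mul hγ_le hμ_le (hμ_pos k).le hγ0.le).trans hD
  · refine (not_summable_iff_tendsto_nat_atTop_of_nonneg
      fun k => (mul_pos (hγ_pos k) (hμ_pos k)).le).mp ?_
    rw [(hγD.mul hμD).summable_iff]; linarith
  · push_cast; linarith
  · push_cast; linarith

/-- Lemma 4.5: feasible tuning sequences for a.s. convergence.
With `γ k = γ₀/(k+1)^a` and `μ k = 2^b μ₀/(k+κ)^b` (`κ = 2` for even `k`, `κ = 1` for odd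
`k`), positive `γ₀, μ₀` with `γ₀ μ₀ ≤ L(m+n)`, and positive `a, b, δ ≤ 1` with
`a/b > 1 + 2δ(n+m)`, `a + b ≤ 1`, `a + 2b > 1`, `a − δb(m+n) > 1/2`, the sequence `μ`
satisfies the alternating rule and `(γ, μ)` satisfies Assumption 4 with
`λ_min = 1/((m+n)(L + τ μ₀^δ))` and `α = −δ(n+m)`. -/
theorem stmt8 (n m : ℕ) (hn : 1 ≤ n) (hm : 1 ≤ m)
    (L τ γ0 μ0 a b δ : ℝ)
    (hL : 0 < L) (hτ : 0 < τ) (hγ0 : 0 < γ0) (hμ0 : 0 < μ0)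
    (hγμ : γ0 * μ0 ≤ L * ((m : ℝ) + n))
    (ha : 0 < a) (hb : 0 < b) (hδ0 : 0 < δ) (hδ1 : δ ≤ 1)
    (hab1 : 1 + 2 * δ * ((n : ℝ) + m) < a / b)
    (hab2 : a + b ≤ 1) (hab3 : 1 < a + 2 * b)
    (hab4 : 1 / 2 < a - δ * b * ((m : ℝ) + n))
    (γ μ : ℕ → ℝ)
    (hγdef : ∀ k, γ k = γ0 / ((k : ℝ) + 1) ^ a)
    (hμdef : ∀ k, μ k = 2 ^ b * μ0 / ((k : ℝ) + (if Even k then 2 else 1)) ^ b) :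
    -- the alternating rule (2.3) for the regularization parameter
    (∀ k, 1 ≤ k → (Odd k → μ k = μ (k - 1)) ∧ (Even k → μ k < μ (k - 1))) ∧
    -- Assumption 4(a)
    Tendsto (fun k => γ k * μ k ^ (2 * (-δ * ((n : ℝ) + m)) - 1)) atTop (nhds 0) ∧
    -- Assumption 4(b)
    ((∀ k, μ (k + 1) ≤ μ k) ∧ Tendsto μ atTop (nhds 0)) ∧
    -- Assumption 4(c)
    (∀ k, (1 / (((m : ℝ) + n) * (L + τ * μ0 ^ δ))) * γ k * μ k ≤ 1) ∧
    -- Assumption 4(d)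
    Tendsto (fun N => ∑ k ∈ Finset.range N, γ k * μ k) atTop atTop ∧
    -- Assumption 4(e)
    Summable (fun k => μ k ^ 2 * γ k) ∧
    -- Assumption 4(f)
    Summable (fun k => γ k ^ 2 * μ k ^ (2 * (-δ * ((n : ℝ) + m)))) :=
  stmt8_general n m L τ γ0 μ0 a b δ hτ hγ0 hμ0 hγμ ha hb hab1 hab2 hab3 hab4 γ μ hγdef hμdef
end

section
/- Let γ_k = γ_0/(k+1)^a and μ_k = 2^b μ_0/(k+κ)^b, where κ = 2 if k is even and κ = 1 if k is odd, with positive scalars γ_0, μ_0 satisfying γ_0 μ_0 ≤ L(m+n), and scalars 0 < δ ≤ 1, a > 0, b > 0 with a/b > 1 + 2δ(m+n), a + b < 1, and a/b ≤ 2(1 + δ(m+n)). Then μ_k satisfies μ_k = μ_{k−1} for odd k and μ_k < μ_{k−1} for even k, and the pair (γ_k, μ_k) satisfies Assumption 5 with any 0 < β < 1, with ρ := γ_0^{−1}(μ_0 2^b)^{2+2δ(m+n)}, and with λ_min = 1/((m+n)(L + τ μ_0^δ)) and α = −δ(n+m). -/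
set_option maxHeartbeats 1000000


open Filter Real

/-- Lemma 4.7: feasible tuning sequences for convergence in mean.
With `γ k = γ₀/(k+1)^a` and `μ k = 2^b μ₀/(k+κ)^b` (`κ = 2` for even `k`, `κ = 1` for odd
`k`), positive `γ₀, μ₀` with `γ₀ μ₀ ≤ L(m+n)`, and `0 < δ ≤ 1`, `a, b > 0` with
`a/b > 1 + 2δ(m+n)`, `a + b < 1`, `a/b ≤ 2(1 + δ(m+n))`, the sequence `μ` satisfies the
alternating rule and `(γ, μ)` satisfies Assumption 5 with any `0 < β < 1`, with
`ρ := γ₀⁻¹ (μ₀ 2^b)^(2+2δ(m+n))`, `λ_min = 1/((m+n)(L + τ μ₀^δ))` and `α = −δ(n+m)`. -/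
theorem stmt9 (n m : ℕ) (hn : 1 ≤ n) (hm : 1 ≤ m)
    (L τ γ0 μ0 a b δ : ℝ)
    (hL : 0 < L) (hτ : 0 < τ) (hγ0 : 0 < γ0) (hμ0 : 0 < μ0)
    (hγμ : γ0 * μ0 ≤ L * ((m : ℝ) + n))
    (ha : 0 < a) (hb : 0 < b) (hδ0 : 0 < δ) (hδ1 : δ ≤ 1)
    (hab1 : 1 + 2 * δ * ((m : ℝ) + n) < a / b)
    (hab2 : a + b < 1)
    (hab3 : a / b ≤ 2 * (1 + δ * ((m : ℝ) + n)))
    (γ μ : ℕ → ℝ)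
    (hγdef : ∀ k, γ k = γ0 / ((k : ℝ) + 1) ^ a)
    (hμdef : ∀ k, μ k = 2 ^ b * μ0 / ((k : ℝ) + (if Even k then 2 else 1)) ^ b) :
    -- the alternating rule (2.3) for the regularization parameter
    (∀ k, 1 ≤ k → (Odd k → μ k = μ (k - 1)) ∧ (Even k → μ k < μ (k - 1))) ∧
    -- Assumption 5(a)
    Tendsto (fun k => γ k * μ k ^ (2 * (-δ * ((n : ℝ) + m)) - 1)) atTop (nhds 0) ∧
    -- Assumption 5(b)
    ((∀ k, μ (k + 1) ≤ μ k) ∧ Tendsto μ atTop (nhds 0)) ∧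
    -- Assumption 5(c)
    (∀ k, (1 / (((m : ℝ) + n) * (L + τ * μ0 ^ δ))) * γ k * μ k ≤ 1) ∧
    -- Assumption 5(d), for any 0 < β < 1
    (∀ β : ℝ, 0 < β → β < 1 → ∃ K0 : ℕ, ∀ k, K0 ≤ k →
      γ (k - 1) * μ (k - 1) ^ (2 * (-δ * ((n : ℝ) + m)) - 1) ≤
        γ k * μ k ^ (2 * (-δ * ((n : ℝ) + m)) - 1) *
          (1 + β * (1 / (((m : ℝ) + n) * (L + τ * μ0 ^ δ))) * γ k * μ k)) ∧
    -- Assumption 5(e), with ρ := γ₀⁻¹ (μ₀ 2^b)^(2+2δ(m+n))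
    (∀ k, μ k ^ (2 - 2 * (-δ * ((n : ℝ) + m))) ≤
      (γ0⁻¹ * (μ0 * 2 ^ b) ^ (2 + 2 * δ * ((m : ℝ) + n))) * γ k) := by
  have hn1 : (1:ℝ) ≤ n := by exact_mod_cast hn
  have hm1 : (1:ℝ) ≤ m := by exact_mod_cast hm
  set s : ℝ := δ * ((n:ℝ) + m) with hs_def
  have hs : 0 < s := by rw [hs_def]; nlinarith
  have hE : 2 * (-δ * ((n : ℝ) + m)) - 1 = -(2*s+1) := by rw [hs_def]; ring
  have hE2 : 2 - 2 * (-δ * ((n : ℝ) + m)) = 2*s+2 := by rw [hs_def]; ring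
  have hE3 : 2 + 2 * δ * ((m : ℝ) + n) = 2*s+2 := by rw [hs_def]; ring
  have hba : b * (2*s+1) < a := by
    rw [lt_div_iff₀ hb] at hab1
    have : δ * ((m:ℝ) + n) = s := by rw [hs_def]; ring
    nlinarith [hab1]
  have hab : a ≤ b * (2*s+2) := by
    rw [div_le_iff₀ hb] at hab3
    have : δ * ((m:ℝ) + n) = s := by rw [hs_def]; ring
    nlinarith [hab3]
  have ha1 : a < 1 := by linarith
  have hEneg : 2 * (-δ * ((n : ℝ) + m)) - 1 ≤ 0 := by rw [hE]; linarith
  -- basic positivity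
  have hden_pos : ∀ k : ℕ, (0:ℝ) < (k:ℝ) + (if Even k then 2 else 1) := by
    intro k; split_ifs <;> positivity
  have hμpos : ∀ k, 0 < μ k := by
    intro k; rw [hμdef k]
    exact div_pos (by positivity) (Real.rpow_pos_of_pos (hden_pos k) b)
  have hγpos : ∀ k, 0 < γ k := fun k => by rw [hγdef k]; positivity
  have one_le_rpow : ∀ x p : ℝ, 1 ≤ x → 0 ≤ p → 1 ≤ x ^ p := by
    intro x p hx hp
    simpa using Real.rpow_le_rpow_of_exponent_le hx hp
  have hγle : ∀ k, γ k ≤ γ0 := by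
    intro k; rw [hγdef k]
    have hk0 : (0:ℝ) ≤ (k:ℝ) := Nat.cast_nonneg k
    exact div_le_self hγ0.le (one_le_rpow _ _ (by linarith) ha.le)
  -- bounds on μ
  have hμub : ∀ k : ℕ, μ k ≤ 2^b * μ0 / ((k:ℝ)+1)^b := by
    intro k; rw [hμdef k]
    have hk0 : (0:ℝ) ≤ (k:ℝ) := Nat.cast_nonneg k
    apply div_le_div_of_nonneg_left (by positivity) (Real.rpow_pos_of_pos (by linarith) b)
    exact Real.rpow_le_rpow (by linarith) (by split_ifs <;> linarith) hb.le
  have hμlb : ∀ k : ℕ, 2^b * μ0 / ((k:ℝ)+2)^b ≤ μ k := by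
    intro k; rw [hμdef k]
    have hk0 : (0:ℝ) ≤ (k:ℝ) := Nat.cast_nonneg k
    apply div_le_div_of_nonneg_left (by positivity) (Real.rpow_pos_of_pos (hden_pos k) b)
    apply Real.rpow_le_rpow (le_of_lt (hden_pos k)) (by split_ifs <;> linarith) hb.le
  have hμμ0 : ∀ k, μ k ≤ μ0 := by
    intro k
    rw [hμdef k]
    have h2 : (2:ℝ) ≤ (k:ℝ) + (if Even k then 2 else 1) := by
      rcases Nat.even_or_odd k with h | h
      · have hk0 : (0:ℝ) ≤ (k:ℝ) := Nat.cast_nonneg k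
        simp only [if_pos h]; linarith
      · have hk1 : 1 ≤ k := Nat.one_le_iff_ne_zero.mpr (by rintro rfl; simp at h)
        have : (1:ℝ) ≤ (k:ℝ) := by exact_mod_cast hk1
        simp only [if_neg (Nat.not_even_iff_odd.mpr h)]; linarith
    calc 2^b * μ0 / ((k:ℝ) + (if Even k then 2 else 1))^b
        ≤ 2^b * μ0 / (2:ℝ)^b := by
          apply div_le_div_of_nonneg_left (by positivity) (by positivity)
          exact Real.rpow_le_rpow (by norm_num) h2 hb.le
      _ = μ0 := by rw [mul_comm, mul_div_assoc, div_self (by positivity), mul_one]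
  have hμanti : ∀ k, μ (k+1) ≤ μ k := by
    intro k
    rw [hμdef k, hμdef (k+1)]
    rcases Nat.even_or_odd k with h | h
    · have h' : ¬ Even (k+1) := by simp [Nat.even_add_one, h]
      simp only [if_pos h, if_neg h']
      push_cast
      apply le_of_eq
      rw [show (k:ℝ)+1+1 = (k:ℝ)+2 by ring]
    · have hne : ¬ Even k := Nat.not_even_iff_odd.mpr h
      have h' : Even (k+1) := Nat.even_add_one.mpr hne
      simp only [if_pos h', if_neg hne]
      push_cast
      have hk0 : (0:ℝ) ≤ (k:ℝ) := Nat.cast_nonneg k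
      apply div_le_div_of_nonneg_left (by positivity) (Real.rpow_pos_of_pos (by linarith) b)
      exact Real.rpow_le_rpow (by linarith) (by linarith) hb.le
  refine ⟨?_, ?_, ⟨hμanti, ?_⟩, ?_, ?_, ?_⟩
  · -- alternating rule
    intro k hk
    have hkcast : ((k-1:ℕ):ℝ) = (k:ℝ) - 1 := by
      rw [Nat.cast_sub hk]; norm_num
    have hk1 : (1:ℝ) ≤ (k:ℝ) := by exact_mod_cast hk
    constructor
    · intro hodd
      have hke : ¬ Even k := Nat.not_even_iff_odd.mpr hodd
      have hkm : Even (k-1) := by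
        rcases hodd with ⟨j, hj⟩; exact ⟨j, by omega⟩
      rw [hμdef k, hμdef (k-1), if_neg hke, if_pos hkm, hkcast]
      rw [show (k:ℝ)-1+2 = (k:ℝ)+1 by ring]
    · intro heven
      have hkm : ¬ Even (k-1) := by simp [Nat.even_sub hk, heven]
      rw [hμdef k, hμdef (k-1), if_pos heven, if_neg hkm, hkcast]
      have he1 : (k:ℝ) - 1 + 1 = (k:ℝ) := by ring
      rw [he1]
      apply div_lt_div_of_pos_left (by positivity) (Real.rpow_pos_of_pos (by linarith) b)
      exact Real.rpow_lt_rpow (by linarith) (by linarith) hb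
  · -- Assumption 5(a)
    simp only [hE]
    have key : Tendsto (fun k:ℕ =>
        (γ0 * ((2:ℝ)^b*μ0)^(-(2*s+1)) * (2:ℝ)^(b*(2*s+1))) * ((k:ℝ)+1)^(b*(2*s+1)-a))
        atTop (nhds 0) := by
      rw [show (0:ℝ) = (γ0 * ((2:ℝ)^b*μ0)^(-(2*s+1)) * (2:ℝ)^(b*(2*s+1))) * 0 by ring]
      apply Tendsto.const_mul
      have h1 : Tendsto (fun x:ℝ => x ^ (-(a - b*(2*s+1)))) atTop (nhds 0) :=
        tendsto_rpow_neg_atTop (by linarith)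
      have h2 : Tendsto (fun k:ℕ => (k:ℝ)+1) atTop atTop :=
        tendsto_atTop_add_const_right _ 1 tendsto_natCast_atTop_atTop
      have h3 : Tendsto (fun k:ℕ => ((k:ℝ)+1)^(-(a-b*(2*s+1)))) atTop (nhds 0) := h1.comp h2
      rw [show b*(2*s+1)-a = -(a-b*(2*s+1)) by ring]
      exact h3
    apply squeeze_zero (fun k => mul_nonneg (hγpos k).le (Real.rpow_nonneg (hμpos k).le _)) _ key
    intro k
    have hcalc : ((2:ℝ)^b*μ0/((k:ℝ)+2)^b) ^ (-(2*s+1))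
        = ((2:ℝ)^b*μ0)^(-(2*s+1)) * ((k:ℝ)+2)^(b*(2*s+1)) := by
      rw [Real.div_rpow (by positivity) (by positivity),
        ← Real.rpow_mul (by positivity : (0:ℝ) ≤ (k:ℝ)+2),
        div_eq_mul_inv, ← Real.rpow_neg (by positivity : (0:ℝ) ≤ (k:ℝ)+2)]
      congr 1
      ring
    rw [hγdef k]
    calc γ0/((k:ℝ)+1)^a * μ k ^ (-(2*s+1))
        ≤ γ0/((k:ℝ)+1)^a * (((2:ℝ)^b*μ0/((k:ℝ)+2)^b) ^ (-(2*s+1))) := by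
          apply mul_le_mul_of_nonneg_left _ (by positivity)
          exact Real.rpow_le_rpow_of_nonpos (by positivity) (hμlb k) (by linarith)
      _ = γ0/((k:ℝ)+1)^a * (((2:ℝ)^b*μ0)^(-(2*s+1)) * ((k:ℝ)+2)^(b*(2*s+1))) := by
          rw [hcalc]
      _ ≤ γ0/((k:ℝ)+1)^a * (((2:ℝ)^b*μ0)^(-(2*s+1)) *
            ((2:ℝ)^(b*(2*s+1)) * ((k:ℝ)+1)^(b*(2*s+1)))) := by
          have hk0 : (0:ℝ) ≤ (k:ℝ) := Nat.cast_nonneg k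
          have h2k : ((k:ℝ)+2) ≤ 2*((k:ℝ)+1) := by linarith
          have hbs : (0:ℝ) ≤ b*(2*s+1) := by positivity
          have h5 := Real.rpow_le_rpow (by positivity) h2k hbs
          rw [Real.mul_rpow (by norm_num) (by positivity)] at h5
          exact mul_le_mul_of_nonneg_left
            (mul_le_mul_of_nonneg_left h5 (by positivity)) (by positivity)
      _ = (γ0 * ((2:ℝ)^b*μ0)^(-(2*s+1)) * (2:ℝ)^(b*(2*s+1))) * ((k:ℝ)+1)^(b*(2*s+1)-a) := by
          rw [Real.rpow_sub (by positivity : (0:ℝ) < (k:ℝ)+1)]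
          ring
  · -- Assumption 5(b): tendsto
    have key : Tendsto (fun k:ℕ => (2:ℝ)^b*μ0 * ((k:ℝ)+1)^(-b)) atTop (nhds 0) := by
      rw [show (0:ℝ) = (2:ℝ)^b*μ0 * 0 by ring]
      apply Tendsto.const_mul
      have h1 : Tendsto (fun x:ℝ => x ^ (-b)) atTop (nhds 0) := tendsto_rpow_neg_atTop hb
      have h2 : Tendsto (fun k:ℕ => (k:ℝ)+1) atTop atTop :=
        tendsto_atTop_add_const_right _ 1 tendsto_natCast_atTop_atTop
      exact h1.comp h2
    apply squeeze_zero (fun k => (hμpos k).le) _ key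
    intro k
    calc μ k ≤ 2^b*μ0/((k:ℝ)+1)^b := hμub k
      _ = 2^b*μ0 * ((k:ℝ)+1)^(-b) := by
          rw [Real.rpow_neg (by positivity : (0:ℝ) ≤ (k:ℝ)+1), div_eq_mul_inv]
  · -- Assumption 5(c)
    intro k
    have hT : (0:ℝ) < τ * μ0 ^ δ := by positivity
    have hlam : (0:ℝ) < 1 / (((m:ℝ)+n) * (L + τ*μ0^δ)) := by
      apply div_pos one_pos
      apply mul_pos (by linarith) (by linarith)
    have h1 : γ0 * μ0 ≤ ((m:ℝ)+n) * (L + τ*μ0^δ) := by nlinarith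
    calc (1 / (((m:ℝ)+n) * (L + τ*μ0^δ))) * γ k * μ k
        ≤ (1 / (((m:ℝ)+n) * (L + τ*μ0^δ))) * γ0 * μ0 := by
          apply mul_le_mul (mul_le_mul_of_nonneg_left (hγle k) hlam.le) (hμμ0 k)
            (hμpos k).le (by positivity)
      _ = (γ0*μ0) / (((m:ℝ)+n) * (L + τ*μ0^δ)) := by ring
      _ ≤ 1 := (div_le_one (by nlinarith)).mpr h1
  · -- Assumption 5(d)
    intro β hβ0 hβ1
    have hT : (0:ℝ) < τ * μ0 ^ δ := by positivity
    have hMN : (0:ℝ) < ((m:ℝ)+n) * (L + τ*μ0^δ) := by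
      apply mul_pos (by linarith) (by linarith)
    have hlam : (0:ℝ) < 1 / (((m:ℝ)+n) * (L + τ*μ0^δ)) := div_pos one_pos hMN
    set lam := 1 / (((m:ℝ)+n) * (L + τ*μ0^δ)) with hlamdef
    set D : ℝ := β * lam * γ0 * (2^b*μ0) with hD
    have hDpos : 0 < D := by
      apply mul_pos (mul_pos (mul_pos hβ0 hlam) hγ0) (by positivity)
    set C : ℝ := D / a with hC
    have hCpos : 0 < C := div_pos hDpos ha
    have h1 : Tendsto (fun k:ℕ => ((k:ℝ)+2)^(a+b-1)) atTop (nhds 0) := by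
      have ha' : Tendsto (fun x:ℝ => x ^ (-(1-(a+b)))) atTop (nhds 0) :=
        tendsto_rpow_neg_atTop (by linarith)
      have h2 : Tendsto (fun k:ℕ => (k:ℝ)+2) atTop atTop :=
        tendsto_atTop_add_const_right _ 2 tendsto_natCast_atTop_atTop
      have h3 : Tendsto (fun k:ℕ => ((k:ℝ)+2)^(-(1-(a+b)))) atTop (nhds 0) := ha'.comp h2
      rw [show a+b-1 = -(1-(a+b)) by ring]
      exact h3
    have h2 : ∀ᶠ k:ℕ in atTop, ((k:ℝ)+2)^(a+b-1) < C/3 :=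
      h1.eventually_lt_const (by positivity)
    rw [eventually_atTop] at h2
    obtain ⟨K1, hK1⟩ := h2
    refine ⟨max K1 1, fun k hk => ?_⟩
    have hk1 : 1 ≤ k := le_trans (le_max_right _ _) hk
    have hkK : K1 ≤ k := le_trans (le_max_left _ _) hk
    have hxpos : (0:ℝ) < (k:ℝ) := by exact_mod_cast hk1
    have hx1 : (1:ℝ) ≤ (k:ℝ) := by exact_mod_cast hk1
    have hpoly : ((k:ℝ)+2)^(a+b) ≤ C * k := by
      have e1 : ((k:ℝ)+2)^(a+b) = ((k:ℝ)+2)^(a+b-1) * ((k:ℝ)+2) := by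
        conv_lhs => rw [show a+b = (a+b-1)+1 by ring]
        rw [Real.rpow_add_one (by positivity : ((k:ℝ)+2) ≠ 0)]
      rw [e1]
      have h3 : ((k:ℝ)+2) ≤ 3*(k:ℝ) := by linarith
      calc ((k:ℝ)+2)^(a+b-1) * ((k:ℝ)+2) ≤ (C/3) * (3*(k:ℝ)) := by
            apply mul_le_mul (hK1 k hkK).le h3 (by positivity) (by positivity)
        _ = C * k := by ring
    set c : ℝ := β * lam * γ k * μ k with hc
    have hcpos : 0 < c := by
      exact mul_pos (mul_pos (mul_pos hβ0 hlam) (hγpos k)) (hμpos k)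
    have hγk : γ0 * (2^b*μ0) / ((k:ℝ)+2)^(a+b) ≤ γ k * μ k := by
      calc γ0 * (2^b*μ0) / ((k:ℝ)+2)^(a+b)
          = (γ0/((k:ℝ)+2)^a) * (2^b*μ0/((k:ℝ)+2)^b) := by
            rw [Real.rpow_add (by positivity : (0:ℝ) < (k:ℝ)+2), ← div_mul_div_comm]
        _ ≤ (γ0/((k:ℝ)+1)^a) * (2^b*μ0/((k:ℝ)+2)^b) := by
            apply mul_le_mul_of_nonneg_right _ (by positivity)
            apply div_le_div_of_nonneg_left hγ0.le (by positivity)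
            exact Real.rpow_le_rpow (by positivity) (by linarith) ha.le
        _ ≤ γ k * μ k := by
            rw [hγdef k]
            exact mul_le_mul_of_nonneg_left (hμlb k) (by positivity)
    have claim1 : a/(k:ℝ) ≤ c := by
      have claim0 : a/(k:ℝ) ≤ D / ((k:ℝ)+2)^(a+b) := by
        rw [div_le_div_iff₀ hxpos (by positivity)]
        calc a * ((k:ℝ)+2)^(a+b) ≤ a*(C*(k:ℝ)) := mul_le_mul_of_nonneg_left hpoly ha.le
          _ = (a*C)*(k:ℝ) := by ring
          _ = D*(k:ℝ) := by rw [hC]; field_simp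
      refine claim0.trans ?_
      calc D / ((k:ℝ)+2)^(a+b) = β*lam*(γ0*(2^b*μ0)/((k:ℝ)+2)^(a+b)) := by
            rw [hD]; ring
        _ ≤ β*lam*(γ k*μ k) := by
            apply mul_le_mul_of_nonneg_left hγk (by positivity)
        _ = c := by rw [hc]; ring
    have hkcast : ((k-1:ℕ):ℝ) + 1 = (k:ℝ) := by
      rw [Nat.cast_sub hk1]; norm_num
    have hbern : ((k:ℝ)+1)^a ≤ (k:ℝ)^a * (1 + c) := by
      have h7 : ((k:ℝ)+1) = (k:ℝ)*(1+1/(k:ℝ)) := by field_simp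
      rw [h7, Real.mul_rpow (by positivity) (by positivity)]
      apply mul_le_mul_of_nonneg_left _ (by positivity)
      calc (1+1/(k:ℝ))^a ≤ 1 + a*(1/(k:ℝ)) := by
            have hik : (0:ℝ) ≤ 1/(k:ℝ) := by positivity
            exact rpow_one_add_le_one_add_mul_self (by linarith) ha.le ha1.le
        _ = 1 + a/(k:ℝ) := by ring
        _ ≤ 1 + c := by linarith
    have claim2 : γ (k-1) ≤ γ k * (1+c) := by
      rw [hγdef, hγdef, hkcast, div_mul_eq_mul_div,
        div_le_div_iff₀ (by positivity) (by positivity)]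
      calc γ0 * ((k:ℝ)+1)^a ≤ γ0 * ((k:ℝ)^a*(1+c)) :=
            mul_le_mul_of_nonneg_left hbern hγ0.le
        _ = γ0*(1+c)*(k:ℝ)^a := by ring
    have hμk : μ k ≤ μ (k-1) := by
      have h8 := hμanti (k-1)
      rwa [Nat.sub_add_cancel hk1] at h8
    have claim3 : μ (k-1) ^ (2*(-δ*((n:ℝ)+m))-1) ≤ μ k ^ (2*(-δ*((n:ℝ)+m))-1) :=
      Real.rpow_le_rpow_of_nonpos (hμpos k) hμk hEneg
    calc γ (k-1) * μ (k-1) ^ (2*(-δ*((n:ℝ)+m))-1)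
        ≤ γ (k-1) * μ k ^ (2*(-δ*((n:ℝ)+m))-1) :=
          mul_le_mul_of_nonneg_left claim3 (hγpos _).le
      _ ≤ (γ k * (1+c)) * μ k ^ (2*(-δ*((n:ℝ)+m))-1) :=
          mul_le_mul_of_nonneg_right claim2 (Real.rpow_nonneg (hμpos k).le _)
      _ = γ k * μ k ^ (2*(-δ*((n:ℝ)+m))-1) * (1 + c) := by ring
  · -- Assumption 5(e)
    intro k
    simp only [hE2, hE3]
    rw [hγdef k]
    have h1 : μ k ^ (2*s+2) ≤ (2^b*μ0/((k:ℝ)+1)^b)^(2*s+2) :=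
      Real.rpow_le_rpow (hμpos k).le (hμub k) (by positivity)
    refine h1.trans ?_
    rw [Real.div_rpow (by positivity) (by positivity),
      ← Real.rpow_mul (by positivity : (0:ℝ) ≤ (k:ℝ)+1)]
    have heq : γ0⁻¹ * (μ0*2^b)^(2*s+2) * (γ0/((k:ℝ)+1)^a)
        = (μ0*2^b)^(2*s+2)/((k:ℝ)+1)^a := by
      field_simp
    rw [heq, show (2:ℝ)^b*μ0 = μ0*2^b by ring]
    have hk0 : (0:ℝ) ≤ (k:ℝ) := Nat.cast_nonneg k
    apply div_le_div_of_nonneg_left (by positivity) (Real.rpow_pos_of_pos (by linarith) a)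
    apply Real.rpow_le_rpow_of_exponent_le (by linarith)
    calc a ≤ b*(2*s+2) := hab
      _ = b*(2*s+2) := rfl
end

section
/- Let n ≥ 1, m ≥ 1, and M > 0. Let B_0 = c·I ∈ ℝ^{n×n} with 0 < c ≤ M, and for j = 1,…,m define B_j := B_{j−1} − B_{j−1}s_j s_jᵀ B_{j−1}/(s_jᵀ B_{j−1} s_j) + y_j y_jᵀ/(y_jᵀ s_j), where s_j ≠ 0, s_jᵀ y_j > 0, and ‖y_j‖²/(y_jᵀ s_j) ≤ M for each j. Then each B_j is symmetric positive definite and Trace(B_m) ≤ (m+n)·M; consequently the largest eigenvalue of B_m is at most (m+n)·M. -/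
/-!
A BFGS update replaces the quadratic form of `P` by
`xᵀ P x - (xᵀ P s)² / (sᵀ P s) + (yᵀ x)² / (yᵀ s)`. The first two terms are `uᵀ P u` for the
`P`-orthogonal projection `u = x - (xᵀ P s / sᵀ P s) s` of `x` away from `s`, which is positive
unless `x` is a multiple of `s`; in that case the last term is positive. So positive definiteness
propagates along the iteration. On traces, each update subtracts `‖P s‖² / (sᵀ P s) ≥ 0` and
adds `‖y‖² / (yᵀ s) ≤ M`, so `tr B_m ≤ n c + m M`, and every eigenvalue of a positive semidefinite
matrix is bounded by its trace.
-/

open Matrix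

namespace Matrix

variable {ι : Type*} [Fintype ι]

noncomputable def bfgsUpdate (P : Matrix ι ι ℝ) (s y : ι → ℝ) : Matrix ι ι ℝ :=
  P - (1 / (s ⬝ᵥ P *ᵥ s)) • vecMulVec (P *ᵥ s) (s ᵥ* P) + (1 / (y ⬝ᵥ s)) • vecMulVec y y

namespace IsHermitian

variable {P : Matrix ι ι ℝ}

theorem vecMul_eq_mulVec (hP : P.IsHermitian) (v : ι → ℝ) : v ᵥ* P = P *ᵥ v := by
  rw [← mulVec_transpose, ← conjTranspose_eq_transpose_of_trivial, hP.eq]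

theorem dotProduct_mulVec_comm (hP : P.IsHermitian) (u v : ι → ℝ) :
    u ⬝ᵥ P *ᵥ v = v ⬝ᵥ P *ᵥ u := by
  rw [dotProduct_mulVec, hP.vecMul_eq_mulVec, dotProduct_comm]

theorem bfgsUpdate_eq (hP : P.IsHermitian) (s y : ι → ℝ) : P.bfgsUpdate s y =
    P - (1 / (s ⬝ᵥ P *ᵥ s)) • vecMulVec (P *ᵥ s) (P *ᵥ s) + (1 / (y ⬝ᵥ s)) • vecMulVec y y := by
  rw [bfgsUpdate, hP.vecMul_eq_mulVec]

theorem bfgsUpdate (hP : P.IsHermitian) (s y : ι → ℝ) : (P.bfgsUpdate s y).IsHermitian := by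
  have hvv (v : ι → ℝ) : (vecMulVec v v).IsHermitian := by
    simpa using (posSemidef_vecMulVec_self_star v).isHermitian
  rw [hP.bfgsUpdate_eq]
  exact (hP.sub ((hvv _).smul (.all _))).add ((hvv _).smul (.all _))

theorem dotProduct_bfgsUpdate_mulVec (hP : P.IsHermitian) (s y x : ι → ℝ) :
    x ⬝ᵥ P.bfgsUpdate s y *ᵥ x
      = x ⬝ᵥ P *ᵥ x - (x ⬝ᵥ P *ᵥ s) ^ 2 / (s ⬝ᵥ P *ᵥ s) + (y ⬝ᵥ x) ^ 2 / (y ⬝ᵥ s) := by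
  simp only [hP.bfgsUpdate_eq, add_mulVec, sub_mulVec, smul_mulVec, vecMulVec_mulVec,
    dotProduct_add, dotProduct_sub, dotProduct_smul, smul_eq_mul, MulOpposite.smul_eq_mul_unop,
    MulOpposite.unop_op]
  rw [dotProduct_comm (P *ᵥ s) x, dotProduct_comm x y]
  ring

theorem dotProduct_mulVec_sub_smul (hP : P.IsHermitian) {s : ι → ℝ} (ha : s ⬝ᵥ P *ᵥ s ≠ 0)
    (x : ι → ℝ) :
    (x - ((x ⬝ᵥ P *ᵥ s) / (s ⬝ᵥ P *ᵥ s)) • s) ⬝ᵥ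
        P *ᵥ (x - ((x ⬝ᵥ P *ᵥ s) / (s ⬝ᵥ P *ᵥ s)) • s)
      = x ⬝ᵥ P *ᵥ x - (x ⬝ᵥ P *ᵥ s) ^ 2 / (s ⬝ᵥ P *ᵥ s) := by
  simp only [mulVec_sub, mulVec_smul, sub_dotProduct, dotProduct_sub, smul_dotProduct,
    dotProduct_smul, smul_eq_mul, hP.dotProduct_mulVec_comm s x]
  field_simp
  ring

end IsHermitian

theorem PosDef.bfgsUpdate {P : Matrix ι ι ℝ} (hP : P.PosDef) {s y : ι → ℝ} (hs : s ≠ 0)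
    (hsy : 0 < y ⬝ᵥ s) : (P.bfgsUpdate s y).PosDef := by
  have ha : 0 < s ⬝ᵥ P *ᵥ s := by simpa using hP.dotProduct_mulVec_pos hs
  refine .of_dotProduct_mulVec_pos (hP.isHermitian.bfgsUpdate s y) fun x hx => ?_
  rw [star_trivial, hP.isHermitian.dotProduct_bfgsUpdate_mulVec,
    ← hP.isHermitian.dotProduct_mulVec_sub_smul ha.ne']
  set l := (x ⬝ᵥ P *ᵥ s) / (s ⬝ᵥ P *ᵥ s)
  by_cases hu : x - l • s = 0
  · have hx' : x = l • s := sub_eq_zero.mp hu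
    have hl : l ≠ 0 := fun h => hx (by simpa [h] using hx')
    have hyx : y ⬝ᵥ x = l * (y ⬝ᵥ s) := by rw [hx', dotProduct_smul, smul_eq_mul]
    rw [hu, zero_dotProduct, zero_add, hyx]
    positivity
  · have := hP.dotProduct_mulVec_pos hu
    rw [star_trivial] at this
    positivity

theorem PosSemidef.trace_bfgsUpdate_le {P : Matrix ι ι ℝ} (hP : P.PosSemidef) (s y : ι → ℝ) :
    (P.bfgsUpdate s y).trace ≤ P.trace + (y ⬝ᵥ y) / (y ⬝ᵥ s) := by
  have ha : 0 ≤ s ⬝ᵥ P *ᵥ s := by simpa using hP.dotProduct_mulVec_nonneg s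
  have hPs : 0 ≤ (P *ᵥ s) ⬝ᵥ (P *ᵥ s) := by simpa using dotProduct_star_self_nonneg (P *ᵥ s)
  rw [hP.isHermitian.bfgsUpdate_eq, trace_add, trace_sub, trace_smul, trace_smul,
    trace_vecMulVec, trace_vecMulVec, smul_eq_mul, smul_eq_mul, one_div_mul_eq_div,
    one_div_mul_eq_div, add_le_add_iff_right, sub_le_self_iff]
  positivity

theorem PosSemidef.le_trace_of_mem_spectrum [DecidableEq ι] {A : Matrix ι ι ℝ}
    (hA : A.PosSemidef) {t : ℝ} (ht : t ∈ spectrum ℝ A) : t ≤ A.trace := by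
  obtain ⟨i, rfl⟩ := hA.isHermitian.spectrum_real_eq_range_eigenvalues ▸ ht
  rw [hA.isHermitian.trace_eq_sum_eigenvalues]
  exact Finset.single_le_sum (fun j _ => hA.eigenvalues_nonneg j) (Finset.mem_univ i)

end Matrix

theorem stmt17_general (n m : ℕ) (M c : ℝ)
    (hc : 0 < c) (hcM : c ≤ M)
    (B : ℕ → Matrix (Fin n) (Fin n) ℝ) (s y : ℕ → Fin n → ℝ)
    (hB0 : B 0 = c • (1 : Matrix (Fin n) (Fin n) ℝ))
    (hs : ∀ j, 1 ≤ j → j ≤ m → s j ≠ 0)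
    (hsy : ∀ j, 1 ≤ j → j ≤ m → 0 < s j ⬝ᵥ y j)
    (hyM : ∀ j, 1 ≤ j → j ≤ m → (y j ⬝ᵥ y j) / (y j ⬝ᵥ s j) ≤ M)
    (hrec : ∀ j, 1 ≤ j → j ≤ m →
      B j = B (j - 1)
        - (1 / (s j ⬝ᵥ (B (j - 1)).mulVec (s j))) •
            Matrix.vecMulVec ((B (j - 1)).mulVec (s j)) (Matrix.vecMul (s j) (B (j - 1)))
        + (1 / (y j ⬝ᵥ s j)) • Matrix.vecMulVec (y j) (y j)) :
    (∀ j, j ≤ m → (B j).PosDef) ∧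
      (B m).trace ≤ ((m : ℝ) + n) * M ∧
      ∀ t ∈ spectrum ℝ (B m), t ≤ ((m : ℝ) + n) * M := by
  have hbounds : ∀ j ≤ m, (B j).PosDef ∧ (B j).trace ≤ n * c + j * M := by
    intro j
    induction j with
    | zero => simpa [hB0, mul_comm] using PosDef.one.smul hc
    | succ k ih =>
      intro hk
      obtain ⟨hpd, htr⟩ := ih (k.le_succ.trans hk)
      have h1 : 1 ≤ k + 1 := k.succ_pos
      have hBk : B (k + 1) = (B k).bfgsUpdate (s (k + 1)) (y (k + 1)) := hrec _ h1 hk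
      have hys : 0 < y (k + 1) ⬝ᵥ s (k + 1) :=
        dotProduct_comm (s _) (y _) ▸ hsy _ h1 hk
      refine ⟨hBk ▸ hpd.bfgsUpdate (hs _ h1 hk) hys, ?_⟩
      have hyMk := hyM (k + 1) h1 hk
      have htrk := hBk ▸ hpd.posSemidef.trace_bfgsUpdate_le (s (k + 1)) (y (k + 1))
      push_cast
      linarith
  obtain ⟨hpd, htr⟩ := hbounds m le_rfl
  have htrace : (B m).trace ≤ ((m : ℝ) + n) * M := by
    nlinarith [(n.cast_nonneg : (0 : ℝ) ≤ n)]
  exact ⟨fun j hj => (hbounds j hj).1, htrace,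
    fun t ht => (hpd.posSemidef.le_trace_of_mem_spectrum ht).trans htrace⟩

/-- BFGS (direct Hessian-approximation) updates starting from `B 0 = c • I`
with `0 < c ≤ M`, using pairs `(s j, y j)` with `s j ≠ 0`, `s jᵀ y j > 0` and
`‖y j‖²/(y jᵀ s j) ≤ M`, produce symmetric positive definite matrices with
`Trace (B m) ≤ (m+n) M`; consequently every (real) eigenvalue of `B m` is at most `(m+n) M`. -/
theorem stmt17 (n m : ℕ) (hn : 1 ≤ n) (hm : 1 ≤ m) (M c : ℝ)
    (hM : 0 < M) (hc : 0 < c) (hcM : c ≤ M)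
    (B : ℕ → Matrix (Fin n) (Fin n) ℝ) (s y : ℕ → Fin n → ℝ)
    (hB0 : B 0 = c • (1 : Matrix (Fin n) (Fin n) ℝ))
    (hs : ∀ j, 1 ≤ j → j ≤ m → s j ≠ 0)
    (hsy : ∀ j, 1 ≤ j → j ≤ m → 0 < s j ⬝ᵥ y j)
    (hyM : ∀ j, 1 ≤ j → j ≤ m → (y j ⬝ᵥ y j) / (y j ⬝ᵥ s j) ≤ M)
    (hrec : ∀ j, 1 ≤ j → j ≤ m →
      B j = B (j - 1)
        - (1 / (s j ⬝ᵥ (B (j - 1)).mulVec (s j))) •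
            Matrix.vecMulVec ((B (j - 1)).mulVec (s j)) (Matrix.vecMul (s j) (B (j - 1)))
        + (1 / (y j ⬝ᵥ s j)) • Matrix.vecMulVec (y j) (y j)) :
    (∀ j, j ≤ m → (B j).PosDef) ∧
      (B m).trace ≤ ((m : ℝ) + n) * M ∧
      ∀ t ∈ spectrum ℝ (B m), t ≤ ((m : ℝ) + n) * M :=
  stmt17_general n m M c hc hcM B s y hB0 hs hsy hyM hrec
end
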